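/- arXiv:0911.1289 — 3 statements merged into one kernel-verified Lean document; each statement's English description precedes it below -/
import Mathlib

section
/- For any nonempty set E ⊆ ℝ and any function f : ℝ → ℝ with inf_{x∈E} h_f(x) = h > 0, the Hausdorff dimension of the range satisfies dim_H f(E) ≤ (dim_H E)/h ∧ 1. -/
open Filter MeasureTheory Set
open scoped ENNReal

/-- Pointwise Hölder exponent of `f` at `x`. -/
noncomputable def holderExp (f : ℝ → ℝ) (x : ℝ) : ℝ :=
  Filter.liminf
    (fun r : ℝ =>
      Real.log (⨆ s ∈ Metric.ball x r, ⨆ t ∈ Metric.ball x r, |f s - f t|) / Real.log r)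
    (nhdsWithin 0 (Set.Ioi 0))

/-!
If `0 < α < h_f(x)`, the oscillation of `f` on `B(x, r)` is below `r ^ α` for all small `r`, so
`|f x - f y| ≤ 2 ^ α |x - y| ^ α` for `y` close to `x`. Sorting the points of `E` by the radius on
which this holds writes `E` as a countable union of pieces on each of which `f` is locally
`α`-Hölder, and an `α`-Hölder map multiplies Hausdorff dimension by at most `1 / α`. Letting
`α ↑ h` gives the bound `dim_H E / h`; the bound `1` is `dim_H ℝ`.
-/

open scoped NNReal Topology
open Metric

section Oscillation

variable {X : Type*} {f : X → ℝ} {S : Set X}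

noncomputable def osc (f : X → ℝ) (S : Set X) : ℝ := ⨆ s ∈ S, ⨆ t ∈ S, |f s - f t|

theorem osc_nonneg : 0 ≤ osc f S :=
  Real.iSup_nonneg fun _ => Real.iSup_nonneg fun _ =>
    Real.iSup_nonneg fun _ => Real.iSup_nonneg fun _ => abs_nonneg _

-- Unbounded real suprema are `0` by convention, hence so is the oscillation of an unbounded `f`.
theorem osc_eq_zero_of_not_bddAbove (hf : ¬ BddAbove ((fun y => |f y|) '' S)) : osc f S = 0 := by
  have hrow : ∀ s ∈ S, ⨆ t ∈ S, |f s - f t| = 0 := by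
    intro s hs
    refine Real.iSup_of_not_bddAbove fun ⟨b, hb⟩ => hf ⟨b + |f s|, ?_⟩
    rintro _ ⟨t, ht, rfl⟩
    have hst : |f s - f t| ≤ b := by
      simpa only [ciSup_pos ht] using hb (mem_range_self t)
    linarith [abs_sub_abs_le_abs_sub (f t) (f s), abs_sub_comm (f t) (f s)]
  exact le_antisymm (Real.iSup_nonpos fun s => Real.iSup_nonpos fun hs => (hrow s hs).le) osc_nonneg

theorem abs_sub_le_osc (hf : BddAbove ((fun y => |f y|) '' S)) {s t : X} (hs : s ∈ S)
    (ht : t ∈ S) : |f s - f t| ≤ osc f S := by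
  obtain ⟨M, hM⟩ := hf
  have hpair : ∀ s' ∈ S, ∀ t' ∈ S, |f s' - f t'| ≤ 2 * M := fun s' hs' t' ht' =>
    (abs_sub _ _).trans (by linarith [hM ⟨s', hs', rfl⟩, hM ⟨t', ht', rfl⟩])
  have hM0 : 0 ≤ 2 * M := (abs_nonneg _).trans (hpair s hs s hs)
  have hrow : ∀ t', ⨆ _ : t' ∈ S, |f s - f t'| ≤ 2 * M := fun t' =>
    Real.iSup_le (hpair s hs t') hM0
  have hcol : ∀ s', ⨆ _ : s' ∈ S, ⨆ t' ∈ S, |f s' - f t'| ≤ 2 * M := fun s' =>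
    Real.iSup_le (fun hs' => Real.iSup_le (fun t' => Real.iSup_le (hpair s' hs' t') hM0) hM0) hM0
  refine le_ciSup_of_le ⟨2 * M, forall_mem_range.2 hcol⟩ s ?_
  rw [ciSup_pos hs]
  exact le_ciSup_of_le ⟨2 * M, forall_mem_range.2 hrow⟩ t
    (ciSup_pos ht (f := fun _ => |f s - f t|)).ge

end Oscillation

theorem holderExp_eq_liminf_osc (f : ℝ → ℝ) (x : ℝ) :
    holderExp f x = liminf (fun r => Real.log (osc f (ball x r)) / Real.log r) (𝓝[>] 0) := rfl

theorem eventually_osc_ball_lt_rpow {f : ℝ → ℝ} {x α : ℝ} (hα : 0 < α) (hlt : α < holderExp f x) :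
    ∀ᶠ r in 𝓝[>] 0, 0 < osc f (ball x r) ∧ osc f (ball x r) < r ^ α := by
  rw [holderExp_eq_liminf_osc] at hlt
  have hbdd : IsBoundedUnder (· ≥ ·) (𝓝[>] 0)
      (fun r => Real.log (osc f (ball x r)) / Real.log r) := by
    by_contra hb
    rw [Real.liminf_of_not_isBoundedUnder hb] at hlt
    exact hlt.not_gt hα
  filter_upwards [eventually_lt_of_lt_liminf hlt hbdd, Ioo_mem_nhdsGT one_pos]
    with r hr ⟨hr0, hr1⟩
  have hlogr : Real.log r < 0 := Real.log_neg hr0 hr1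
  have hlog : Real.log (osc f (ball x r)) < α * Real.log r := (lt_div_iff_of_neg hlogr).1 hr
  have hpos : 0 < osc f (ball x r) := osc_nonneg.lt_of_ne fun h0 => by
    rw [← h0, Real.log_zero] at hlog
    nlinarith
  refine ⟨hpos, ?_⟩
  rwa [← Real.log_lt_log_iff hpos (by positivity), Real.log_rpow hr0]

theorem exists_pos_dist_le_rpow_of_lt_holderExp {f : ℝ → ℝ} {x α : ℝ} (hα : 0 < α)
    (hlt : α < holderExp f x) :
    ∃ δ > 0, ∀ y, dist x y < δ → dist (f x) (f y) ≤ 2 ^ α * dist x y ^ α := by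
  obtain ⟨ε, hε, hsub⟩ := mem_nhdsGT_iff_exists_Ioo_subset.1 (eventually_osc_ball_lt_rpow hα hlt)
  refine ⟨ε / 2, half_pos hε, fun y hy => ?_⟩
  rcases eq_or_ne x y with rfl | hxy
  · simp [Real.zero_rpow hα.ne']
  have hr : 2 * dist x y ∈ Ioo 0 ε := ⟨mul_pos two_pos (dist_pos.2 hxy), by linarith⟩
  obtain ⟨hpos, hosc⟩ := hsub hr
  have hbdd : BddAbove ((fun y => |f y|) '' ball x (2 * dist x y)) := by
    by_contra hb
    exact hpos.ne' (osc_eq_zero_of_not_bddAbove hb)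
  have hy' : y ∈ ball x (2 * dist x y) := by
    rw [mem_ball, dist_comm]
    linarith [hr.1]
  calc dist (f x) (f y) = |f x - f y| := Real.dist_eq _ _
    _ ≤ osc f (ball x (2 * dist x y)) := abs_sub_le_osc hbdd (mem_ball_self hr.1) hy'
    _ ≤ (2 * dist x y) ^ α := hosc.le
    _ = 2 ^ α * dist x y ^ α := Real.mul_rpow zero_le_two dist_nonneg

theorem HolderOnWith.of_dist_le {X Y : Type*} [PseudoMetricSpace X] [PseudoMetricSpace Y]
    {C r : ℝ≥0} {f : X → Y} {s : Set X}
    (h : ∀ x ∈ s, ∀ y ∈ s, dist (f x) (f y) ≤ C * dist x y ^ (r : ℝ)) : HolderOnWith C r f s := by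
  intro x hx y hy
  rw [edist_nndist, edist_nndist, ← ENNReal.coe_rpow_of_nonneg _ r.coe_nonneg, ← ENNReal.coe_mul,
    ENNReal.coe_le_coe, ← NNReal.coe_le_coe]
  exact_mod_cast h x hx y hy

theorem dimH_image_le_of_forall_dist_le_rpow {X Y : Type*} [MetricSpace X]
    [SecondCountableTopology X] [MetricSpace Y] {C r : ℝ≥0} {f : X → Y} (hr : 0 < r) {s : Set X}
    (hf : ∀ x ∈ s, ∃ δ > 0, ∀ y ∈ s, dist x y < δ → dist (f x) (f y) ≤ C * dist x y ^ (r : ℝ)) :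
    dimH (f '' s) ≤ dimH s / r := by
  set T : ℕ → Set X := fun n => {x ∈ s | ∀ y ∈ s, dist x y < 1 / (n + 1) →
    dist (f x) (f y) ≤ C * dist x y ^ (r : ℝ)}
  have hcover : s ⊆ ⋃ n, T n := by
    intro x hx
    obtain ⟨δ, hδ, hxδ⟩ := hf x hx
    obtain ⟨n, hn⟩ := exists_nat_one_div_lt hδ
    exact mem_iUnion.2 ⟨n, hx, fun y hy hxy => hxδ y hy (hxy.trans hn)⟩
  -- The radius `1 / (n + 1)` is uniform on `T n`, so `f` is Hölder on
  -- `T n ∩ ball x (1 / (2 (n + 1)))`.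
  have hT : ∀ n, dimH (f '' T n) ≤ dimH s / r := by
    intro n
    refine (dimH_image_le_of_locally_holder_on hr fun x _ => ⟨C, T n ∩ ball x (1 / (2 * (n + 1))),
      inter_mem_nhdsWithin _ (ball_mem_nhds _ (by positivity)), ?_⟩).trans
      (ENNReal.div_le_div_right (dimH_mono (sep_subset _ _)) _)
    refine HolderOnWith.of_dist_le fun y hy z hz => hy.1.2 z hz.1.1 ?_
    calc dist y z ≤ dist y x + dist z x := dist_triangle_right _ _ _
      _ < 1 / (2 * (n + 1)) + 1 / (2 * (n + 1)) := add_lt_add hy.2 hz.2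
      _ = 1 / (n + 1) := by field_simp; ring
  calc dimH (f '' s) ≤ dimH (⋃ n, f '' T n) := dimH_mono (image_iUnion ▸ image_mono hcover)
    _ = ⨆ n, dimH (f '' T n) := dimH_iUnion _
    _ ≤ dimH s / r := iSup_le hT

theorem dimH_image_le_div_of_lt_holderExp {f : ℝ → ℝ} {E : Set ℝ} {α : ℝ} (hα : 0 < α)
    (hE : ∀ x ∈ E, α < holderExp f x) : dimH (f '' E) ≤ dimH E / ENNReal.ofReal α := by
  lift α to ℝ≥0 using hα.le
  rw [ENNReal.ofReal_coe_nnreal]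
  refine dimH_image_le_of_forall_dist_le_rpow (C := 2 ^ (α : ℝ)) (by exact_mod_cast hα)
    fun x hx => ?_
  obtain ⟨δ, hδ, hxδ⟩ := exists_pos_dist_le_rpow_of_lt_holderExp hα (hE x hx)
  exact ⟨δ, hδ, fun y _ hy => by simpa using hxδ y hy⟩

theorem ENNReal.le_div_ofReal_of_forall_lt {a b : ℝ≥0∞} {h : ℝ} (ha : a ≠ ∞) (hh : 0 < h)
    (H : ∀ α, 0 < α → α < h → a ≤ b / ENNReal.ofReal α) : a ≤ b / ENNReal.ofReal h := by
  have hdiv {α : ℝ} (hα : 0 < α) : a ≤ b / ENNReal.ofReal α ↔ a * ENNReal.ofReal α ≤ b :=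
    ENNReal.le_div_iff_mul_le (Or.inl (ENNReal.ofReal_pos.2 hα).ne') (Or.inl ENNReal.ofReal_ne_top)
  rw [hdiv hh]
  have hlim : Tendsto (fun α => a * ENNReal.ofReal α) (𝓝[<] h) (𝓝 (a * ENNReal.ofReal h)) :=
    ENNReal.Tendsto.const_mul ((ENNReal.continuous_ofReal.tendsto h).mono_left nhdsWithin_le_nhds)
      (Or.inr ha)
  refine le_of_tendsto hlim ?_
  filter_upwards [Ioo_mem_nhdsLT hh] with α hα
  exact (hdiv hα.1).1 (H α hα.1 hα.2)

theorem stmt_2_general (f : ℝ → ℝ) (E : Set ℝ)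
    (h : ℝ) (hh : 0 < h) (hinf : sInf (holderExp f '' E) = h) :
    dimH (f '' E) ≤ min (dimH E / ENNReal.ofReal h) 1 := by
  have hbdd : BddBelow (holderExp f '' E) := by
    by_contra hb
    rw [Real.sInf_of_not_bddBelow hb] at hinf
    exact hh.ne hinf
  have hle : ∀ x ∈ E, h ≤ holderExp f x := fun x hx =>
    hinf ▸ csInf_le hbdd (mem_image_of_mem _ hx)
  have hone : dimH (f '' E) ≤ 1 := Real.dimH_univ ▸ dimH_mono (subset_univ _)
  refine le_min (ENNReal.le_div_ofReal_of_forall_lt (ne_top_of_le_ne_top ENNReal.one_ne_top hone)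
    hh fun α hα hαh => ?_) hone
  exact dimH_image_le_div_of_lt_holderExp hα fun x hx => hαh.trans_le (hle x hx)

theorem stmt_2 (f : ℝ → ℝ) (E : Set ℝ) (hne : E.Nonempty)
    (h : ℝ) (hh : 0 < h) (hinf : sInf (holderExp f '' E) = h) :
    dimH (f '' E) ≤ min (dimH E / ENNReal.ofReal h) 1 :=
  stmt_2_general f E h hh hinf
end

section
/- For any nonempty set E ⊆ ℝ and any function f : ℝ → ℝ with inf_{x∈E} h_f(x) = h ∈ (0,1], the Hausdorff dimension of the graph satisfies dim_H G_f(E) ≤ dim_H E + 1 − h. -/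
/-!
If `a < holderExp f x`, then for all small `r` the oscillation of `f` on `ball x r` is at most
`r ^ a`, hence `|f x - f y| ≤ |x - y| ^ a` for `y` near `x`. Sorting the points of `E` by the radius
on which this holds writes `E` as a countable union of sets on each of which `f` is locally
`a`-Hölder with constant `1`.

If `f` is `C`-Hölder of exponent `r ≤ 1` on `s`, the graph over a set of diameter `δ ≤ 1` lies in
a `δ × 2Cδ ^ r` box, which is covered by at most `(2C + 1) δ ^ (r - 1)` squares of side `δ`. This
turns covers of `s` into covers of the graph and gives `μH[d + 1 - r] (graph) ≤ (2C + 1) μH[d] s`,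
hence `dimH (graph) ≤ dimH s + 1 - r`. Countable stability of `dimH` and letting `a ↑ h` conclude.
-/

open Filter MeasureTheory Set
open scoped ENNReal

open Metric Topology
open scoped NNReal

/-- `holderExp f x` is the `liminf` of `log (oscOn f (ball x r)) / log r` as `r → 0+`. A real
supremum of an unbounded family is `0`, so `oscOn f B = 0` whenever `f` is unbounded on `B`. -/
noncomputable def oscOn (f : ℝ → ℝ) (B : Set ℝ) : ℝ :=
  ⨆ s ∈ B, ⨆ t ∈ B, |f s - f t|

theorem oscOn_nonneg (f : ℝ → ℝ) (B : Set ℝ) : 0 ≤ oscOn f B :=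
  Real.iSup_nonneg fun _ => Real.iSup_nonneg fun _ =>
    Real.iSup_nonneg fun _ => Real.iSup_nonneg fun _ => abs_nonneg _

section Oscillation

variable {f : ℝ → ℝ} {B : Set ℝ}

theorem oscOn_eq_zero_of_not_bddAbove (hf : ¬BddAbove ((fun x => |f x|) '' B)) :
    oscOn f B = 0 := by
  have hinner : ∀ s, ⨆ t ∈ B, |f s - f t| = 0 := by
    intro s
    refine Real.iSup_of_not_bddAbove fun ⟨M, hM⟩ => hf ⟨M + |f s|, ?_⟩
    rintro _ ⟨t, ht, rfl⟩
    have hst : |f s - f t| ≤ M := by simpa [ciSup_pos ht] using hM ⟨t, rfl⟩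
    have := abs_sub_abs_le_abs_sub (f t) (f s)
    rw [abs_sub_comm] at this
    linarith
  simp [oscOn, hinner]

theorem abs_sub_le_oscOn (hf : BddAbove ((fun x => |f x|) '' B)) {s t : ℝ} (hs : s ∈ B)
    (ht : t ∈ B) : |f s - f t| ≤ oscOn f B := by
  obtain ⟨M, hM⟩ := hf
  have hpair : ∀ u ∈ B, ∀ v ∈ B, |f u - f v| ≤ 2 * M := fun u hu v hv => by
    linarith [hM ⟨u, hu, rfl⟩, hM ⟨v, hv, rfl⟩, abs_sub (f u) (f v)]
  have hM0 : 0 ≤ 2 * M := (abs_nonneg _).trans (hpair s hs s hs)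
  have hinner : ∀ u ∈ B, ⨆ v ∈ B, |f u - f v| ≤ 2 * M := fun u hu =>
    Real.iSup_le (fun v => Real.iSup_le (fun hv => hpair u hu v hv) hM0) hM0
  calc |f s - f t| ≤ ⨆ v ∈ B, |f s - f v| :=
        le_ciSup₂ (f := fun v (_ : v ∈ B) => |f s - f v|) ⟨2 * M, by
          simp only [mem_upperBounds, mem_iUnion, mem_range]
          rintro _ ⟨v, hv, rfl⟩
          exact hpair s hs v hv⟩ t ht
    _ ≤ oscOn f B :=
        le_ciSup₂ (f := fun u (_ : u ∈ B) => ⨆ v ∈ B, |f u - f v|) ⟨2 * M, by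
          simp only [mem_upperBounds, mem_iUnion, mem_range]
          rintro _ ⟨u, hu, rfl⟩
          exact hinner u hu⟩ s hs

theorem abs_sub_le_oscOn_of_pos (h : 0 < oscOn f B) {s t : ℝ} (hs : s ∈ B) (ht : t ∈ B) :
    |f s - f t| ≤ oscOn f B :=
  abs_sub_le_oscOn (by_contra fun hf => h.ne' (oscOn_eq_zero_of_not_bddAbove hf)) hs ht

end Oscillation

section HolderExponent

variable {f : ℝ → ℝ} {x a : ℝ}

theorem eventually_abs_sub_le_rpow_of_lt_holderExp (ha : 0 ≤ a) (hx : a < holderExp f x) :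
    ∀ᶠ r in 𝓝[>] 0, ∀ s ∈ ball x r, ∀ t ∈ ball x r, |f s - f t| ≤ r ^ a := by
  have hbdd : IsBoundedUnder (· ≥ ·) (𝓝[>] 0)
      fun r => Real.log (oscOn f (ball x r)) / Real.log r := by
    by_contra hnb
    have : holderExp f x = 0 := Real.liminf_of_not_isBoundedUnder hnb
    linarith
  filter_upwards [eventually_lt_of_lt_liminf hx hbdd, Ioo_mem_nhdsGT one_pos]
    with r hr ⟨hr0, hr1⟩
  have hlogr := Real.log_neg hr0 hr1
  have hlog : Real.log (oscOn f (ball x r)) < a * Real.log r :=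
    (lt_div_iff_of_neg hlogr).1 hr
  have hpos : 0 < oscOn f (ball x r) := by
    refine (oscOn_nonneg f _).lt_of_ne fun h0 => ?_
    rw [← h0, Real.log_zero] at hlog
    nlinarith
  intro s hs t ht
  exact (abs_sub_le_oscOn_of_pos hpos hs ht).trans (Real.lt_rpow_of_log_lt hr0 hlog).le

theorem eventually_abs_sub_le_abs_sub_rpow_of_lt_holderExp (ha : 0 ≤ a) (hx : a < holderExp f x) :
    ∀ᶠ y in 𝓝 x, |f x - f y| ≤ |x - y| ^ a := by
  obtain ⟨ρ, hρ, hosc⟩ :=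
    mem_nhdsGT_iff_exists_Ioo_subset.1 (eventually_abs_sub_le_rpow_of_lt_holderExp ha hx)
  filter_upwards [ball_mem_nhds x hρ] with y hy
  rw [mem_ball, Real.dist_eq, abs_sub_comm] at hy
  have hcont : Tendsto (· ^ a) (𝓝[>] |x - y|) (𝓝 (|x - y| ^ a)) :=
    (Real.continuousAt_rpow_const _ _ (Or.inr ha)).tendsto.mono_left nhdsWithin_le_nhds
  refine ge_of_tendsto hcont ?_
  filter_upwards [Ioo_mem_nhdsGT hy] with r ⟨hxy, hrρ⟩
  have hr0 : 0 < r := (abs_nonneg _).trans_lt hxy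
  exact hosc ⟨hr0, hrρ⟩ x (mem_ball_self hr0) y (by rwa [mem_ball, Real.dist_eq, abs_sub_comm])

end HolderExponent

theorem Metric.ediam_prod_le {α β : Type*} [PseudoEMetricSpace α] [PseudoEMetricSpace β]
    (s : Set α) (t : Set β) : ediam (s ×ˢ t) ≤ max (ediam s) (ediam t) :=
  ediam_le fun _ hp _ hq => by
    rw [Prod.edist_eq]
    exact max_le_max (edist_le_ediam_of_mem hp.1 hq.1) (edist_le_ediam_of_mem hp.2 hq.2)

theorem exists_lt_mem_Icc_add_mul {b L δ y : ℝ} (hδ : 0 < δ) (hy : y ∈ Icc b (b + L)) :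
    ∃ k < ⌊L / δ⌋₊ + 1, y ∈ Icc (b + k * δ) (b + (k + 1) * δ) := by
  have hyb : 0 ≤ (y - b) / δ := div_nonneg (by linarith [hy.1]) hδ.le
  refine ⟨⌊(y - b) / δ⌋₊, Nat.lt_succ_of_le (Nat.floor_le_floor ?_), ?_, ?_⟩
  · exact div_le_div_of_nonneg_right (by linarith [hy.2]) hδ.le
  · have := (le_div_iff₀ hδ).1 (Nat.floor_le hyb)
    linarith
  · have := (div_lt_iff₀ hδ).1 (Nat.lt_floor_add_one ((y - b) / δ))
    linarith

theorem natFloor_add_one_mul_rpow_le (C : ℝ≥0) {δ r d : ℝ} (hδ0 : 0 ≤ δ) (hδ1 : δ ≤ 1)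
    (hr : r ≤ 1) (hD : 0 < d + 1 - r) :
    ((⌊2 * C * δ ^ r / δ⌋₊ + 1 : ℕ) : ℝ≥0∞) * ENNReal.ofReal δ ^ (d + 1 - r) ≤
      (2 * C + 1) * ENNReal.ofReal δ ^ d := by
  rcases hδ0.eq_or_lt with rfl | hδ0
  · simp [ENNReal.zero_rpow_of_pos hD]
  have hpow : δ ^ (r - 1) * δ ^ (d + 1 - r) = δ ^ d := by
    rw [← Real.rpow_add hδ0]; ring_nf
  have hquot : 2 * C * δ ^ r / δ = 2 * C * δ ^ (r - 1) := by
    rw [Real.rpow_sub_one hδ0.ne']; ring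
  have hone : 1 ≤ δ ^ (r - 1) := Real.one_le_rpow_of_pos_of_le_one_of_nonpos hδ0 hδ1 (by linarith)
  have hN : (⌊2 * C * δ ^ r / δ⌋₊ + 1 : ℝ) ≤ (2 * C + 1) * δ ^ (r - 1) := by
    have := Nat.floor_le (show 0 ≤ 2 * C * δ ^ r / δ by positivity)
    rw [hquot] at this ⊢
    linarith
  have hreal : (⌊2 * C * δ ^ r / δ⌋₊ + 1 : ℝ) * δ ^ (d + 1 - r) ≤ (2 * C + 1) * δ ^ d :=
    calc (⌊2 * C * δ ^ r / δ⌋₊ + 1 : ℝ) * δ ^ (d + 1 - r)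
        ≤ (2 * C + 1) * δ ^ (r - 1) * δ ^ (d + 1 - r) := by gcongr
      _ = (2 * C + 1) * δ ^ d := by rw [mul_assoc, hpow]
  have hC : (2 * C + 1 : ℝ≥0∞) = ENNReal.ofReal (2 * C + 1) := by
    exact_mod_cast (ENNReal.ofReal_coe_nnreal (p := 2 * C + 1)).symm
  rw [ENNReal.ofReal_rpow_of_pos hδ0, ENNReal.ofReal_rpow_of_pos hδ0, hC,
    ← ENNReal.ofReal_natCast, ← ENNReal.ofReal_mul (Nat.cast_nonneg _),
    ← ENNReal.ofReal_mul (by positivity)]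
  exact ENNReal.ofReal_le_ofReal (by push_cast; exact hreal)

theorem exists_cover_tsum_lt_of_hausdorffMeasure_lt {X : Type*} [EMetricSpace X]
    [MeasurableSpace X] [BorelSpace X] {d : ℝ} {s : Set X} {c δ : ℝ≥0∞} (hc : μH[d] s < c)
    (hδ : 0 < δ) :
    ∃ t : ℕ → Set X, s ⊆ ⋃ n, t n ∧ (∀ n, ediam (t n) ≤ δ) ∧
      ∑' n, ⨆ _ : (t n).Nonempty, ediam (t n) ^ d < c := by
  rw [Measure.hausdorffMeasure_apply] at hc
  have := (le_iSup₂ (f := fun (δ : ℝ≥0∞) (_ : 0 < δ) =>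
    ⨅ (t : ℕ → Set X) (_ : s ⊆ ⋃ n, t n) (_ : ∀ n, ediam (t n) ≤ δ),
      ∑' n, ⨆ _ : (t n).Nonempty, ediam (t n) ^ d) δ hδ).trans_lt hc
  simpa only [iInf_lt_iff, exists_prop] using this

namespace HolderOnWith

variable {C r : ℝ≥0} {f : ℝ → ℝ} {s : Set ℝ}

theorem graph_inter_subset_iUnion_prod (hf : HolderOnWith C r f s) (hr0 : 0 < r) {t : Set ℝ}
    {x₀ δ : ℝ} (hx₀ : x₀ ∈ s) (hδ0 : 0 ≤ δ) (hdist : ∀ x ∈ t, dist x x₀ ≤ δ) :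
    (fun x => (x, f x)) '' (t ∩ s) ⊆ ⋃ k < ⌊2 * C * δ ^ (r : ℝ) / δ⌋₊ + 1,
      t ×ˢ Icc (f x₀ - C * δ ^ (r : ℝ) + k * δ) (f x₀ - C * δ ^ (r : ℝ) + (k + 1) * δ) := by
  rintro _ ⟨x, hx, rfl⟩
  have hfx : f x ∈ Icc (f x₀ - C * δ ^ (r : ℝ)) (f x₀ - C * δ ^ (r : ℝ) + 2 * C * δ ^ (r : ℝ)) := by
    have := hf.dist_le_of_le hx.2 hx₀ (hdist x hx.1)
    rw [Real.dist_eq, abs_le] at this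
    constructor <;> linarith [this.1, this.2]
  simp only [mem_iUnion, mem_prod, exists_prop]
  rcases hδ0.eq_or_lt with rfl | hδ0
  · have h0 : (0 : ℝ) ^ (r : ℝ) = 0 := Real.zero_rpow (NNReal.coe_ne_zero.2 hr0.ne')
    simp only [h0, mul_zero, sub_zero, add_zero, mem_Icc] at hfx
    exact ⟨0, Nat.succ_pos _, hx.1, by simp [h0, le_antisymm hfx.2 hfx.1]⟩
  · obtain ⟨k, hk, hfk⟩ := exists_lt_mem_Icc_add_mul hδ0 hfx
    exact ⟨k, hk, hx.1, hfk⟩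

theorem exists_graph_cover_inter (hf : HolderOnWith C r f s) (hr0 : 0 < r) (hr1 : r ≤ 1)
    {d : ℝ} (hd : 0 < d) {t : Set ℝ} (ht : ediam t ≤ 1) :
    ∃ T : ℕ → Set (ℝ × ℝ), (fun x => (x, f x)) '' (t ∩ s) ⊆ ⋃ k, T k ∧
      (∀ k, ediam (T k) ≤ ediam t) ∧
      ∑' k, ediam (T k) ^ (d + 1 - r) ≤ (2 * C + 1) * ⨆ _ : t.Nonempty, ediam t ^ d := by
  have hD : 0 < d + 1 - r := by have : (r : ℝ) ≤ 1 := hr1; linarith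
  rcases (t ∩ s).eq_empty_or_nonempty with hts | ⟨x₀, hx₀t, hx₀s⟩
  · exact ⟨fun _ => ∅, by simp [hts], fun _ => by simp, by simp [ENNReal.zero_rpow_of_pos hD]⟩
  have hfin : ediam t ≠ ⊤ := (ht.trans_lt ENNReal.one_lt_top).ne
  set δ := diam t
  have hδ : ENNReal.ofReal δ = ediam t := ENNReal.ofReal_toReal hfin
  have hδ0 : 0 ≤ δ := diam_nonneg
  have hdist : ∀ x ∈ t, dist x x₀ ≤ δ := fun x hx => dist_le_diam_of_mem' hfin hx hx₀t
  clear_value δ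
  set N := ⌊2 * C * δ ^ (r : ℝ) / δ⌋₊ + 1
  set T : ℕ → Set (ℝ × ℝ) := fun k => if k < N then
    t ×ˢ Icc (f x₀ - C * δ ^ (r : ℝ) + k * δ) (f x₀ - C * δ ^ (r : ℝ) + (k + 1) * δ) else ∅
  have hTdiam : ∀ k, ediam (T k) ≤ ediam t := by
    intro k
    by_cases hk : k < N
    · simp only [T, if_pos hk]
      refine (ediam_prod_le _ _).trans (max_le le_rfl ?_)
      rw [Real.ediam_Icc, ← hδ]
      ring_nf
      exact le_rfl
    · simp [T, hk]
  refine ⟨T, fun p hp => ?_, hTdiam, ?_⟩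
  · obtain ⟨k, hk, hpk⟩ := mem_iUnion₂.1 (hf.graph_inter_subset_iUnion_prod hr0 hx₀s hδ0 hdist hp)
    exact mem_iUnion.2 ⟨k, by simpa only [T, if_pos (show k < N from hk)] using hpk⟩
  · have hTN : ∀ k ∉ Finset.range N, ediam (T k) ^ (d + 1 - r) = 0 := fun k hk => by
      simp [T, Finset.mem_range.not.1 hk, ENNReal.zero_rpow_of_pos hD]
    rw [iSup_pos ⟨x₀, hx₀t⟩, tsum_eq_sum hTN]
    calc ∑ k ∈ Finset.range N, ediam (T k) ^ (d + 1 - r)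
        ≤ ∑ k ∈ Finset.range N, ediam t ^ (d + 1 - r) :=
          Finset.sum_le_sum fun k _ => ENNReal.rpow_le_rpow (hTdiam k) hD.le
      _ = N * ediam t ^ (d + 1 - r) := by simp
      _ ≤ (2 * C + 1) * ediam t ^ d := ?_
    rw [← hδ]
    exact natFloor_add_one_mul_rpow_le C hδ0 (ENNReal.ofReal_le_one.1 (hδ ▸ ht)) hr1 hD

theorem exists_graph_cover (hf : HolderOnWith C r f s) (hr0 : 0 < r) (hr1 : r ≤ 1)
    {d : ℝ} (hd : 0 < d) {t : ℕ → Set ℝ} (hst : s ⊆ ⋃ n, t n) (ht : ∀ n, ediam (t n) ≤ 1) :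
    ∃ T : ℕ × ℕ → Set (ℝ × ℝ), (fun x => (x, f x)) '' s ⊆ ⋃ i, T i ∧
      (∀ i, ediam (T i) ≤ ediam (t i.1)) ∧
      ∑' i, ediam (T i) ^ (d + 1 - r) ≤
        (2 * C + 1) * ∑' n, ⨆ _ : (t n).Nonempty, ediam (t n) ^ d := by
  choose T hTcov hTdiam hTsum using fun n => hf.exists_graph_cover_inter hr0 hr1 hd (ht n)
  refine ⟨fun i => T i.1 i.2, ?_, fun i => hTdiam i.1 i.2, ?_⟩
  · rintro _ ⟨x, hx, rfl⟩
    obtain ⟨n, hn⟩ := mem_iUnion.1 (hst hx)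
    obtain ⟨k, hk⟩ := mem_iUnion.1 (hTcov n ⟨x, ⟨hn, hx⟩, rfl⟩)
    exact mem_iUnion.2 ⟨(n, k), hk⟩
  · calc ∑' i : ℕ × ℕ, ediam (T i.1 i.2) ^ (d + 1 - r)
        = ∑' n, ∑' k, ediam (T n k) ^ (d + 1 - r) :=
          ENNReal.tsum_prod (f := fun n k => ediam (T n k) ^ (d + 1 - r))
      _ ≤ ∑' n, (2 * C + 1) * ⨆ _ : (t n).Nonempty, ediam (t n) ^ d := ENNReal.tsum_le_tsum hTsum
      _ = _ := ENNReal.tsum_mul_left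

theorem hausdorffMeasure_graph_le (hf : HolderOnWith C r f s) (hr0 : 0 < r) (hr1 : r ≤ 1)
    {d : ℝ} (hd : 0 < d) :
    μH[d + 1 - r] ((fun x => (x, f x)) '' s) ≤ (2 * C + 1) * μH[d] s := by
  rcases eq_or_ne (μH[d] s) ⊤ with htop | hfin
  · simp [htop]
  set ε : ℕ → ℝ≥0∞ := fun n => ((n : ℝ≥0∞) + 1)⁻¹
  have hε0 : ∀ n, 0 < ε n := fun n => ENNReal.inv_pos.2 (by simp)
  have hε1 : ∀ n, ε n ≤ 1 := fun n => ENNReal.inv_le_one.2 le_add_self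
  have hε : Tendsto ε atTop (𝓝 0) := by
    simpa [Function.comp_def] using
      ENNReal.tendsto_inv_nat_nhds_zero.comp (tendsto_add_atTop_nat 1)
  have hcov : ∀ n, ∃ T : ℕ × ℕ → Set (ℝ × ℝ), (fun x => (x, f x)) '' s ⊆ ⋃ i, T i ∧
      (∀ i, ediam (T i) ≤ ε n) ∧
      ∑' i, ediam (T i) ^ (d + 1 - r) ≤ (2 * C + 1) * (μH[d] s + ε n) := by
    intro n
    obtain ⟨t, hst, ht, hsum⟩ := exists_cover_tsum_lt_of_hausdorffMeasure_lt
      (ENNReal.lt_add_right hfin (hε0 n).ne') (hε0 n)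
    obtain ⟨T, hT, hTdiam, hTsum⟩ :=
      hf.exists_graph_cover hr0 hr1 hd hst fun k => (ht k).trans (hε1 n)
    exact ⟨T, hT, fun i => (hTdiam i).trans (ht _), hTsum.trans (by gcongr)⟩
  choose T hT hTdiam hTsum using hcov
  have hlim : Tendsto (fun n => (2 * C + 1 : ℝ≥0∞) * (μH[d] s + ε n)) atTop
      (𝓝 ((2 * C + 1) * μH[d] s)) := by
    simpa using ENNReal.Tendsto.const_mul (tendsto_const_nhds.add hε) (Or.inr (by finiteness))
  calc μH[d + 1 - r] ((fun x => (x, f x)) '' s)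
      ≤ liminf (fun n => ∑' i, ediam (T n i) ^ (d + 1 - r)) atTop :=
        Measure.hausdorffMeasure_le_liminf_tsum _ _ ε hε T (.of_forall hTdiam) (.of_forall hT)
    _ ≤ liminf (fun n => (2 * C + 1 : ℝ≥0∞) * (μH[d] s + ε n)) atTop :=
        liminf_le_liminf (.of_forall hTsum)
    _ = (2 * C + 1) * μH[d] s := hlim.liminf_eq

theorem dimH_graph_le (hf : HolderOnWith C r f s) (hr0 : 0 < r) (hr1 : r ≤ 1) :
    dimH ((fun x => (x, f x)) '' s) ≤ dimH s + 1 - r := by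
  rw [(ENNReal.cancel_coe (a := r)).add_tsub_assoc_of_le (ENNReal.coe_le_one_iff.2 hr1)]
  refine ENNReal.le_of_forall_pos_le_add fun ε hε _ => ?_
  have hs : dimH s ≠ ⊤ := Real.dimH_ne_top s
  set d : ℝ≥0 := (dimH s).toNNReal + ε
  have hd : dimH s < d := by
    rw [ENNReal.coe_add, ENNReal.coe_toNNReal hs]
    exact ENNReal.lt_add_right hs (by exact_mod_cast hε.ne')
  have hd0 : (0 : ℝ) < d := add_pos_of_nonneg_of_pos (dimH s).toNNReal.2 hε
  have hgraph : μH[((d + (1 - r) : ℝ≥0) : ℝ)] ((fun x => (x, f x)) '' s) = 0 := by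
    rw [NNReal.coe_add, NNReal.coe_sub hr1, NNReal.coe_one, ← add_sub_assoc]
    refine le_antisymm ?_ zero_le
    simpa [hausdorffMeasure_of_dimH_lt hd] using hf.hausdorffMeasure_graph_le hr0 hr1 hd0
  calc dimH ((fun x => (x, f x)) '' s) ≤ (d + (1 - r) : ℝ≥0) :=
        dimH_le_of_hausdorffMeasure_ne_top (hgraph ▸ ENNReal.zero_ne_top)
    _ = dimH s + (1 - r) + ε := by
        simp [d, ENNReal.coe_sub, ENNReal.coe_toNNReal hs, add_right_comm]

end HolderOnWith

theorem holderOnWith_one_of_abs_sub_le {f : ℝ → ℝ} {s : Set ℝ} {r : ℝ≥0}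
    (h : ∀ x ∈ s, ∀ y ∈ s, |f x - f y| ≤ |x - y| ^ (r : ℝ)) : HolderOnWith 1 r f s := by
  intro x hx y hy
  rw [ENNReal.coe_one, one_mul, edist_dist, edist_dist, Real.dist_eq, Real.dist_eq,
    ENNReal.ofReal_rpow_of_nonneg (abs_nonneg _) r.coe_nonneg]
  exact ENNReal.ofReal_le_ofReal (h x hx y hy)

theorem dimH_graph_le_of_locally_holderOnWith {f : ℝ → ℝ} {s : Set ℝ} {r : ℝ≥0} (hr0 : 0 < r)
    (hr1 : r ≤ 1) (hf : ∀ x ∈ s, ∃ C : ℝ≥0, ∃ t ∈ 𝓝[s] x, HolderOnWith C r f t) :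
    dimH ((fun x => (x, f x)) '' s) ≤ dimH s + 1 - r := by
  choose! C t htn hC using hf
  rcases TopologicalSpace.countable_cover_nhdsWithin htn with ⟨u, hus, huc, huU⟩
  replace huU := inter_eq_self_of_subset_left huU
  rw [inter_iUnion₂] at huU
  calc dimH ((fun x => (x, f x)) '' s)
      = dimH (⋃ x ∈ u, (fun x => (x, f x)) '' (s ∩ t x)) := by rw [← image_iUnion₂, huU]
    _ = ⨆ x ∈ u, dimH ((fun x => (x, f x)) '' (s ∩ t x)) := dimH_bUnion huc _
    _ ≤ dimH s + 1 - r := iSup₂_le fun x hx =>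
      (((hC x (hus hx)).mono inter_subset_right).dimH_graph_le hr0 hr1).trans <| by
        gcongr
        exact inter_subset_left

theorem dimH_graph_le_of_lt_holderExp {f : ℝ → ℝ} {E : Set ℝ} {a : ℝ≥0} (ha0 : 0 < a)
    (ha1 : a ≤ 1) (hE : ∀ x ∈ E, (a : ℝ) < holderExp f x) :
    dimH ((fun x => (x, f x)) '' E) ≤ dimH E + 1 - a := by
  set S : ℕ → Set ℝ := fun n =>
    {x ∈ E | ∀ y ∈ ball x (n + 1 : ℝ)⁻¹, |f x - f y| ≤ |x - y| ^ (a : ℝ)}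
  have hES : E ⊆ ⋃ n, S n := by
    intro x hx
    obtain ⟨ρ, hρ, hball⟩ := Metric.eventually_nhds_iff.1
      (eventually_abs_sub_le_abs_sub_rpow_of_lt_holderExp a.2 (hE x hx))
    obtain ⟨n, hn⟩ := exists_nat_one_div_lt hρ
    exact mem_iUnion.2 ⟨n, hx, fun y hy => hball (lt_of_lt_of_le hy (by simpa using hn.le))⟩
  have hS : ∀ n, dimH ((fun x => (x, f x)) '' S n) ≤ dimH E + 1 - a := by
    intro n
    refine (dimH_graph_le_of_locally_holderOnWith ha0 ha1 fun x _ => ⟨1,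
      S n ∩ ball x ((n + 1 : ℝ)⁻¹ / 2), inter_mem_nhdsWithin _ (ball_mem_nhds x (by positivity)),
      holderOnWith_one_of_abs_sub_le fun y hy z hz => hy.1.2 z ?_⟩).trans ?_
    · have := dist_triangle_right z y x
      rw [mem_ball]
      linarith [mem_ball.1 hy.2, mem_ball.1 hz.2]
    · gcongr
      exact sep_subset _ _
  calc dimH ((fun x => (x, f x)) '' E) ≤ dimH (⋃ n, (fun x => (x, f x)) '' S n) := by
        rw [← image_iUnion]; exact dimH_mono (image_mono hES)
    _ = ⨆ n, dimH ((fun x => (x, f x)) '' S n) := dimH_iUnion _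
    _ ≤ dimH E + 1 - a := iSup_le hS

theorem stmt_3_general (f : ℝ → ℝ) (E : Set ℝ)
    (h : ℝ) (hh : 0 < h) (h1 : h ≤ 1) (hinf : sInf (holderExp f '' E) = h) :
    dimH ((fun x => (x, f x)) '' E) ≤ dimH E + 1 - ENNReal.ofReal h := by
  have hbdd : BddBelow (holderExp f '' E) := by
    by_contra hb
    rw [Real.sInf_of_not_bddBelow hb] at hinf
    linarith
  have hlow : ∀ x ∈ E, h ≤ holderExp f x := fun x hx => hinf ▸ csInf_le hbdd ⟨x, hx, rfl⟩
  have hlim : Tendsto (fun a => dimH E + 1 - ENNReal.ofReal a) (𝓝[<] h)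
      (𝓝 (dimH E + 1 - ENNReal.ofReal h)) :=
    ENNReal.Tendsto.sub tendsto_const_nhds
      (ENNReal.continuous_ofReal.tendsto h |>.mono_left nhdsWithin_le_nhds)
      (Or.inr ENNReal.ofReal_ne_top)
  refine ge_of_tendsto hlim ?_
  filter_upwards [Ioo_mem_nhdsLT hh] with a ⟨ha0, hah⟩
  exact dimH_graph_le_of_lt_holderExp (a := a.toNNReal) (Real.toNNReal_pos.2 ha0)
    (Real.toNNReal_le_one.2 (hah.le.trans h1))
    fun x hx => (Real.coe_toNNReal a ha0.le).symm ▸ hah.trans_le (hlow x hx)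

theorem stmt_3 (f : ℝ → ℝ) (E : Set ℝ) (hne : E.Nonempty)
    (h : ℝ) (hh : 0 < h) (h1 : h ≤ 1) (hinf : sInf (holderExp f '' E) = h) :
    dimH ((fun x => (x, f x)) '' E) ≤ dimH E + 1 - ENNReal.ofReal h :=
  stmt_3_general f E h hh h1 hinf
end

section
/- Let b ≥ 2 and let (W_0,…,W_{b−1}) be a random vector with values in ℝᵇ such that P(W_j ≠ 0 for all j) = 1, and let Z be a real random variable, independent of W, such that Z satisfies in distribution Z = Σ_{j=0}^{b−1} W_j·Z_j where Z_0,…,Z_{b−1} are i.i.d. copies of Z, independent of W. If φ denotes the characteristic function of Z and l = limsup_{t→∞} |φ(t)|, then l = 0 or l = 1. -/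
/-!
Conditioning on `W`, the self-similarity gives `|φ t| ≤ E ∏ⱼ |φ (Wⱼ t)|`. Fix `ε > 0`. Since `|φ|`
is even and every `Wⱼ ≠ 0` almost surely, each factor is eventually below `l + ε` as `t → ∞`, so
by reverse Fatou (dominated convergence for these bounded integrands) `l ≤ (l + ε) ^ b`. Letting
`ε → 0` gives `l ≤ l ^ b`, and for `l ∈ [0, 1]` and `b ≥ 2` this forces `l ∈ {0, 1}`.
-/

open Filter MeasureTheory ProbabilityTheory Topology

lemma Function.Even.eventually_atTop_comp_mul {α : Type*} {f : ℝ → α} (hf : f.Even)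
    {p : α → Prop} (h : ∀ᶠ s in atTop, p (f s)) {w : ℝ} (hw : w ≠ 0) :
    ∀ᶠ t in atTop, p (f (w * t)) := by
  filter_upwards [(tendsto_id.const_mul_atTop (abs_pos.2 hw)).eventually h] with t ht
  rcases abs_choice w with hw' | hw' <;> rw [hw'] at ht
  · exact ht
  · rwa [neg_mul, hf] at ht

/-- The excess `max (g i - c) 0` tends to `0` in `L¹` by dominated convergence. -/
lemma eventually_integral_le_add_of_ae_eventually_le {ι α : Type*} [MeasurableSpace α]
    {μ : Measure α} [IsProbabilityMeasure μ] {L : Filter ι} [L.IsCountablyGenerated]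
    {g : ι → α → ℝ} {c C δ : ℝ} (hg : ∀ i, AEStronglyMeasurable (g i) μ)
    (hgC : ∀ i, ∀ᵐ x ∂μ, ‖g i x‖ ≤ C) (hgc : ∀ᵐ x ∂μ, ∀ᶠ i in L, g i x ≤ c) (hδ : 0 < δ) :
    ∀ᶠ i in L, ∫ x, g i x ∂μ ≤ c + δ := by
  have hint (i : ι) : Integrable (g i) μ := Integrable.of_bound (hg i) C (hgC i)
  have hint_excess (i : ι) : Integrable (fun x => max (g i x - c) 0) μ :=
    ((hint i).sub (integrable_const c)).pos_part
  have hexcess : Tendsto (fun i => ∫ x, max (g i x - c) 0 ∂μ) L (𝓝 0) := by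
    have hbound (i : ι) : ∀ᵐ x ∂μ, ‖max (g i x - c) 0‖ ≤ |C| + |c| := by
      filter_upwards [hgC i] with x hx
      rw [Real.norm_of_nonneg (le_max_right _ _)]
      exact max_le (by linarith [Real.le_norm_self (g i x), neg_abs_le c, le_abs_self C])
        (by positivity)
    have hzero : ∀ᵐ x ∂μ, Tendsto (fun i => max (g i x - c) 0) L (𝓝 0) := by
      filter_upwards [hgc] with x hx
      exact tendsto_const_nhds.congr' (hx.mono fun i hi => by simp [hi])
    simpa using tendsto_integral_filter_of_dominated_convergence _
      (Eventually.of_forall fun i => (hint_excess i).aestronglyMeasurable)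
      (Eventually.of_forall hbound) (integrable_const _) hzero
  filter_upwards [hexcess.eventually (gt_mem_nhds hδ)] with i hi
  calc ∫ x, g i x ∂μ ≤ ∫ x, (c + max (g i x - c) 0) ∂μ :=
        integral_mono (hint i) ((integrable_const c).add (hint_excess i))
          fun x => by simp [← sub_le_iff_le_add']
    _ = c + ∫ x, max (g i x - c) 0 ∂μ := by
        rw [integral_add (integrable_const c) (hint_excess i)]
        simp
    _ ≤ c + δ := by linarith

lemma eq_zero_or_eq_one_of_le_pow {l : ℝ} {n : ℕ} (h0 : 0 ≤ l) (h1 : l ≤ 1) (hn : 2 ≤ n)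
    (h : l ≤ l ^ n) : l = 0 ∨ l = 1 := by
  by_contra! hl
  have := pow_lt_self_of_lt_one₀ (h0.lt_of_ne' hl.1) (h1.lt_of_ne hl.2) hn
  linarith

section LimsupSelfSimilar

variable {ι : Type*} [Fintype ι] {f : ℝ → ℝ} {ν : Measure (ι → ℝ)} [IsProbabilityMeasure ν]

theorem limsup_le_limsup_pow_card_of_le_integral_prod (hf_meas : Measurable f) (hf0 : 0 ≤ f)
    (hf1 : f ≤ 1) (hf_even : f.Even) (hν : ∀ᵐ w ∂ν, ∀ j, w j ≠ 0)
    (h : ∀ t, f t ≤ ∫ w, ∏ j, f (w j * t) ∂ν) :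
    limsup f atTop ≤ limsup f atTop ^ Fintype.card ι := by
  set l := limsup f atTop
  set n := Fintype.card ι
  have hbdd : IsBoundedUnder (· ≤ ·) atTop f := isBoundedUnder_of ⟨1, hf1⟩
  have hcob : IsCoboundedUnder (· ≤ ·) atTop f := (isBoundedUnder_of ⟨0, hf0⟩).isCoboundedUnder_le
  have hε : ∀ ε > 0, l ≤ (l + ε) ^ n := by
    intro ε hε
    have hev : ∀ᶠ s in atTop, f s < l + ε := eventually_lt_of_limsup_lt (by linarith) hbdd
    have hprod : ∀ᵐ w ∂ν, ∀ᶠ t in atTop, ∏ j, f (w j * t) ≤ (l + ε) ^ n := by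
      filter_upwards [hν] with w hw
      filter_upwards [eventually_all.2 fun j =>
        hf_even.eventually_atTop_comp_mul (p := (· < l + ε)) hev (hw j)] with t ht
      calc ∏ j, f (w j * t) ≤ ∏ _j : ι, (l + ε) :=
            Finset.prod_le_prod (fun j _ => hf0 _) fun j _ => (ht j).le
        _ = (l + ε) ^ n := by simp [n]
    have hmeas (t : ℝ) : AEStronglyMeasurable (fun w : ι → ℝ => ∏ j, f (w j * t)) ν :=
      (Finset.measurable_prod _ fun j _ =>
        hf_meas.comp ((measurable_pi_apply j).mul measurable_const)).aestronglyMeasurable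
    have hbound (t : ℝ) (w : ι → ℝ) : ‖∏ j, f (w j * t)‖ ≤ 1 := by
      rw [Real.norm_of_nonneg (Finset.prod_nonneg fun j _ => hf0 _)]
      exact Finset.prod_le_one (fun j _ => hf0 _) fun j _ => hf1 _
    refine le_of_forall_pos_le_add fun δ hδ => limsup_le_of_le hcob ?_
    filter_upwards [eventually_integral_le_add_of_ae_eventually_le hmeas
      (fun t => ae_of_all _ (hbound t)) hprod hδ] with t ht
    exact (h t).trans ht
  have hcont : Tendsto (fun ε => (l + ε) ^ n) (𝓝[>] 0) (𝓝 (l ^ n)) := by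
    have : Continuous fun ε : ℝ => (l + ε) ^ n := by fun_prop
    exact (this.tendsto' 0 (l ^ n) (by rw [add_zero])).mono_left nhdsWithin_le_nhds
  exact ge_of_tendsto hcont (eventually_nhdsWithin_of_forall hε)

theorem limsup_eq_zero_or_eq_one_of_le_integral_prod (hι : 2 ≤ Fintype.card ι)
    (hf_meas : Measurable f) (hf0 : 0 ≤ f) (hf1 : f ≤ 1) (hf_even : f.Even)
    (hν : ∀ᵐ w ∂ν, ∀ j, w j ≠ 0) (h : ∀ t, f t ≤ ∫ w, ∏ j, f (w j * t) ∂ν) :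
    limsup f atTop = 0 ∨ limsup f atTop = 1 :=
  eq_zero_or_eq_one_of_le_pow
    (le_limsup_of_frequently_le (Frequently.of_forall hf0) (isBoundedUnder_of ⟨1, hf1⟩))
    (limsup_le_of_le (isBoundedUnder_of ⟨0, hf0⟩).isCoboundedUnder_le (Eventually.of_forall hf1))
    hι (limsup_le_limsup_pow_card_of_le_integral_prod hf_meas hf0 hf1 hf_even hν h)

end LimsupSelfSimilar

lemma ProbabilityTheory.IndepFun.integral_comp_eq_integral_integral {Ω α β E : Type*}
    [MeasurableSpace Ω] [MeasurableSpace α] [MeasurableSpace β]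
    [NormedAddCommGroup E] [NormedSpace ℝ E]
    {P : Measure Ω} [IsFiniteMeasure P] {X : Ω → α} {Y : Ω → β} (hXY : IndepFun X Y P)
    (hX : Measurable X) (hY : Measurable Y) {g : α → β → E}
    (hg : StronglyMeasurable (Function.uncurry g))
    (hg_int : Integrable (Function.uncurry g) ((P.map X).prod (P.map Y))) :
    ∫ ω, g (X ω) (Y ω) ∂P = ∫ x, ∫ ω, g x (Y ω) ∂P ∂(P.map X) := by
  have hmap : P.map (fun ω => (X ω, Y ω)) = (P.map X).prod (P.map Y) :=
    (indepFun_iff_map_prod_eq_prod_map_map hX.aemeasurable hY.aemeasurable).1 hXY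
  calc ∫ ω, g (X ω) (Y ω) ∂P = ∫ p, Function.uncurry g p ∂(P.map fun ω => (X ω, Y ω)) :=
        (integral_map (hX.prodMk hY).aemeasurable hg.aestronglyMeasurable).symm
    _ = ∫ x, ∫ y, g x y ∂(P.map Y) ∂(P.map X) := by rw [hmap, integral_prod _ hg_int]; rfl
    _ = ∫ x, ∫ ω, g x (Y ω) ∂P ∂(P.map X) := by
        congr 1 with x
        exact integral_map hY.aemeasurable
          (hg.comp_measurable measurable_prodMk_left).aestronglyMeasurable

theorem charFun_map_sum_mul_eq_integral_prod {Ω ι : Type*} [MeasurableSpace Ω]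
    {P : Measure Ω} [IsFiniteMeasure P] [Fintype ι] {W : Ω → ι → ℝ} {Z : ι → Ω → ℝ}
    (hW : Measurable W) (hZ : ∀ j, Measurable (Z j)) (hZ_indep : iIndepFun Z P)
    (hWZ : IndepFun W (fun ω j => Z j ω) P) (t : ℝ) :
    charFun (P.map fun ω => ∑ j, W ω j * Z j ω) t
      = ∫ w, ∏ j, charFun (P.map (Z j)) (w j * t) ∂(P.map W) := by
  have hg : Continuous fun p : (ι → ℝ) × (ι → ℝ) =>
      Complex.exp (t * (∑ j, p.1 j * p.2 j : ℝ) * Complex.I) := by fun_prop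
  rw [charFun_apply_real, integral_map (by fun_prop) (by fun_prop),
    hWZ.integral_comp_eq_integral_integral (g := fun w z =>
      Complex.exp (t * (∑ j, w j * z j : ℝ) * Complex.I)) hW (measurable_pi_lambda _ hZ)
      hg.stronglyMeasurable
      (Integrable.of_bound hg.aestronglyMeasurable 1 (ae_of_all _ fun p => ?_))]
  · congr 1 with w
    have hindep : iIndepFun (fun j ω => w j * Z j ω) P :=
      hZ_indep.comp (fun j x => w j * x) fun j => measurable_const.mul measurable_id
    rw [← Finset.prod_congr rfl fun j _ => charFun_map_mul_comp (hZ j).aemeasurable (w j) t,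
      ← Finset.prod_apply, ← hindep.charFun_map_fun_sum_eq_prod fun j => by fun_prop,
      charFun_apply_real, integral_map (by fun_prop) (by fun_prop)]
  · change ‖Complex.exp (t * (∑ j, p.1 j * p.2 j : ℝ) * Complex.I)‖ ≤ 1
    rw [← Complex.ofReal_mul, Complex.norm_exp_ofReal_mul_I]

theorem norm_charFun_le_integral_prod_of_map_eq_map_sum {Ω ι : Type*} [MeasurableSpace Ω]
    {P : Measure Ω} [IsFiniteMeasure P] [Fintype ι] {W : Ω → ι → ℝ} {Z : Ω → ℝ}
    {Zs : ι → Ω → ℝ} (hW : Measurable W) (hZs : ∀ j, Measurable (Zs j))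
    (hcopies : ∀ j, P.map (Zs j) = P.map Z) (hiid : iIndepFun Zs P)
    (hWZ : IndepFun W (fun ω j => Zs j ω) P)
    (hdist : P.map Z = P.map fun ω => ∑ j, W ω j * Zs j ω) (t : ℝ) :
    ‖charFun (P.map Z) t‖ ≤ ∫ w, ∏ j, ‖charFun (P.map Z) (w j * t)‖ ∂(P.map W) := by
  conv_lhs => rw [hdist, charFun_map_sum_mul_eq_integral_prod hW hZs hiid hWZ]
  simp_rw [hcopies, ← norm_prod]
  exact norm_integral_le_integral_norm _

theorem stmt_12 {Ω : Type*} [MeasureSpace Ω] [IsProbabilityMeasure (volume : Measure Ω)]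
    (b : ℕ) (hb : 2 ≤ b) (W : Ω → Fin b → ℝ) (hW : Measurable W)
    (Z : Ω → ℝ) (hZ : Measurable Z)
    (Zs : Fin b → Ω → ℝ) (hZs : ∀ j, Measurable (Zs j))
    (hcopies : ∀ j, Measure.map (Zs j) volume = Measure.map Z volume)
    (hiid : iIndepFun Zs volume)
    (hWindep : IndepFun W (fun ω => fun j => Zs j ω) volume)
    (hWne : volume {ω | ∀ j, W ω j ≠ 0} = 1)
    (hdist : Measure.map Z volume = Measure.map (fun ω => ∑ j, W ω j * Zs j ω) volume)
    (φ : ℝ → ℂ) (hφ : ∀ t : ℝ, φ t = ∫ ω, Complex.exp ((t : ℂ) * (Z ω : ℂ) * Complex.I))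
    (l : ℝ) (hl : l = limsup (fun t => ‖φ t‖) atTop) :
    l = 0 ∨ l = 1 := by
  have : IsProbabilityMeasure (volume.map Z) := Measure.isProbabilityMeasure_map hZ.aemeasurable
  have : IsProbabilityMeasure (volume.map W) := Measure.isProbabilityMeasure_map hW.aemeasurable
  have hφ_eq : φ = charFun (volume.map Z) := funext fun t => by
    rw [hφ, charFun_apply_real, integral_map hZ.aemeasurable (by fun_prop)]
  have hW_ne : ∀ᵐ w ∂(volume.map W), ∀ j, w j ≠ 0 := by
    have hmeas : MeasurableSet {w : Fin b → ℝ | ∀ j, w j ≠ 0} := by measurability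
    rw [ae_map_iff hW.aemeasurable hmeas]
    exact (ae_iff_measure_eq (p := fun ω => ∀ j, W ω j ≠ 0)
      (hmeas.preimage hW).nullMeasurableSet).2 (by simpa using hWne)
  rw [hl, hφ_eq]
  exact limsup_eq_zero_or_eq_one_of_le_integral_prod (by simpa using hb)
    continuous_charFun.norm.measurable (fun t => norm_nonneg _) (fun t => norm_charFun_le_one t)
    (fun t => by simp [charFun_neg]) hW_ne
    (norm_charFun_le_integral_prod_of_map_eq_map_sum hW hZs hcopies hiid hWindep hdist)
end
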